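/- For pairwise distinct primitive types p, q, r, the sequent r, q, p → ((p^⋈·q^⋈)·r^⋈)^⋈ has no derivation in L^⋈ that avoids the rule (cut); consequently, cut elimination fails for L^⋈. -/

import Mathlib

/-!
Without cut, a sequent whose antecedent consists of primitive types can only end with the
axiom `A → A`, a right rule or the cyclic rule (⋈), so its antecedent belongs to a language
read off the succedent: a product concatenates, a bracelet rotates. For
`((p^⋈·q^⋈)·r^⋈)^⋈` this language consists of the rotations of `p, q, r`, and `r, q, p` is
not one of them. With cut, the sequent follows from `p^rev, q^rev, r^rev → (p^⋈·q^⋈)·r^⋈`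
by (rev→rev), a cut with the axiom `X^rev → X^⋈`, and cuts with `t → (t^rev)^rev`.
-/

/-- Types of the Lambek calculus with the bracelet operation `L^⋈`, built from
primitive types `P` by `\` (`ldiv A B = A \ B`), `/` (`rdiv B A = B / A`),
`·` (`mul`), reversal `^rev` (`rev`) and the bracelet operation `^⋈` (`brac`). -/
inductive Fb (P : Type) : Type
  | prim : P → Fb P
  | ldiv : Fb P → Fb P → Fb P
  | rdiv : Fb P → Fb P → Fb P
  | mul  : Fb P → Fb P → Fb P
  | rev  : Fb P → Fb P
  | brac : Fb P → Fb P
deriving DecidableEq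

/-- Derivability of sequents in the Lambek calculus with the bracelet
operation `L^⋈`.  The Boolean flag indicates whether the rule (cut) may be
used: `Db P true` is `L^⋈` (with cut), `Db P false` is its cut-free part. -/
inductive Db (P : Type) : Bool → List (Fb P) → Fb P → Prop
  | ax (c : Bool) (A : Fb P) :
      Db P c [A] A
  | axRevBrac (c : Bool) (A : Fb P) :
      Db P c [Fb.rev A] (Fb.brac A)
  | ldivL (c : Bool) (Γ Δ Pi : List (Fb P)) (A B C : Fb P) :
      Db P c (Γ ++ B :: Δ) C → Db P c Pi A → Pi ≠ [] →
      Db P c (Γ ++ Pi ++ Fb.ldiv A B :: Δ) C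
  | ldivR (c : Bool) (Pi : List (Fb P)) (A B : Fb P) :
      Db P c (A :: Pi) B → Pi ≠ [] →
      Db P c Pi (Fb.ldiv A B)
  | rdivL (c : Bool) (Γ Δ Pi : List (Fb P)) (A B C : Fb P) :
      Db P c (Γ ++ B :: Δ) C → Db P c Pi A → Pi ≠ [] →
      Db P c (Γ ++ Fb.rdiv B A :: (Pi ++ Δ)) C
  | rdivR (c : Bool) (Pi : List (Fb P)) (A B : Fb P) :
      Db P c (Pi ++ [A]) B → Pi ≠ [] →
      Db P c Pi (Fb.rdiv B A)
  | mulL (c : Bool) (Γ Δ : List (Fb P)) (A B C : Fb P) :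
      Db P c (Γ ++ A :: B :: Δ) C →
      Db P c (Γ ++ Fb.mul A B :: Δ) C
  | mulR (c : Bool) (Pi Psi : List (Fb P)) (A B : Fb P) :
      Db P c Pi A → Db P c Psi B → Pi ≠ [] → Psi ≠ [] →
      Db P c (Pi ++ Psi) (Fb.mul A B)
  | revR (c : Bool) (Γ : List (Fb P)) (A : Fb P) :
      Db P c Γ A → Γ ≠ [] →
      Db P c ((Γ.map Fb.rev).reverse) (Fb.rev A)
  | revrevL (c : Bool) (Γ Δ : List (Fb P)) (A B : Fb P) :
      Db P c (Γ ++ A :: Δ) B →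
      Db P c (Γ ++ Fb.rev (Fb.rev A) :: Δ) B
  | revrevR (c : Bool) (Pi : List (Fb P)) (A : Fb P) :
      Db P c Pi A →
      Db P c Pi (Fb.rev (Fb.rev A))
  | bracR (c : Bool) (Pi : List (Fb P)) (A : Fb P) :
      Db P c Pi A →
      Db P c Pi (Fb.brac A)
  | bracL (c : Bool) (A B : Fb P) :
      Db P c [B] (Fb.brac A) →
      Db P c [Fb.brac B] (Fb.brac A)
  | bracC (c : Bool) (Pi Psi : List (Fb P)) (A : Fb P) :
      Db P c (Pi ++ Psi) (Fb.brac A) → Pi ≠ [] → Psi ≠ [] →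
      Db P c (Psi ++ Pi) (Fb.brac A)
  | cut (Γ Δ Pi : List (Fb P)) (A B : Fb P) :
      Db P true Pi A → Db P true (Γ ++ A :: Δ) B → Pi ≠ [] →
      Db P true (Γ ++ Pi ++ Δ) B


namespace Fb

variable {P : Type}

/-- Bounds the antecedents made of primitive types from which a type is cut-free derivable;
divisions and reversal are left unconstrained. -/
def primLang : Fb P → Set (List (Fb P))
  | prim t => {[prim t]}
  | mul A B => Set.image2 (· ++ ·) (primLang A) (primLang B)
  | brac A => {Γ | ∃ Δ ∈ primLang A, Γ ~r Δ}
  | _ => Set.univ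

theorem triple_reverse_notMem_primLang {p q r : P} (hpq : p ≠ q) (hqr : q ≠ r) (hpr : p ≠ r) :
    [prim r, prim q, prim p] ∉
      (brac (mul (mul (brac (prim p)) (brac (prim q))) (brac (prim r)))).primLang := by
  simp only [primLang, Set.mem_ofPred_eq, Set.mem_singleton_iff, Set.mem_image2, exists_eq_left,
    List.isRotated_singleton_iff]
  simp [← List.mem_cyclicPermutations_iff, List.cyclicPermutations_of_ne_nil, hpq, hqr, hpr,
    hpq.symm, hqr.symm, hpr.symm]

end Fb

open Fb

namespace Db

variable {P : Type}

theorem mem_primLang {Γ : List (Fb P)} {C : Fb P} (h : Db P false Γ C)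
    (hΓ : ∀ A ∈ Γ, ∃ t, A = prim t) : Γ ∈ C.primLang := by
  generalize hc : false = c at h
  induction h with
  | ax _ A =>
    obtain ⟨t, rfl⟩ := hΓ A (by simp)
    rfl
  | mulR _ _ _ _ _ _ _ _ _ ih₁ ih₂ =>
    exact ⟨_, ih₁ (fun A hA => hΓ A (by simp [hA])) hc, _,
      ih₂ (fun A hA => hΓ A (by simp [hA])) hc, rfl⟩
  | bracR _ _ _ _ ih =>
    exact ⟨_, ih hΓ hc, List.IsRotated.refl _⟩
  | bracC _ _ _ _ _ _ _ ih =>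
    obtain ⟨Δ, hΔ, hrot⟩ := ih (fun A hA => hΓ A (by simp at hA ⊢; tauto)) hc
    exact ⟨Δ, hΔ, List.isRotated_append.trans hrot⟩
  | cut => cases hc
  | ldivR | rdivR | revR | revrevR => trivial
  -- each remaining rule puts a non-primitive type into the antecedent
  | _ => simp [or_imp, forall_and] at hΓ

theorem cut_revrev {Γ Δ : List (Fb P)} {A B : Fb P} (h : Db P true (Γ ++ rev (rev A) :: Δ) B) :
    Db P true (Γ ++ A :: Δ) B := by
  simpa using cut Γ Δ [A] _ _ (revrevR _ _ _ (ax _ _)) h (by simp)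

theorem cut_map_revrev {Γ Δ : List (Fb P)} {B : Fb P}
    (h : Db P true (Γ ++ Δ.map (rev ∘ rev)) B) : Db P true (Γ ++ Δ) B := by
  induction Δ generalizing Γ with
  | nil => simpa using h
  | cons A Δ ih =>
    simpa using ih (Γ := Γ ++ [A]) (by simpa using cut_revrev (by simpa using h))

theorem reverse_brac_of_map_rev {Γ : List (Fb P)} {A : Fb P} (h : Db P true (Γ.map rev) A)
    (hΓ : Γ ≠ []) : Db P true Γ.reverse (brac A) := by
  have hrev := revR _ _ _ h (by simpa using hΓ)
  have hbrac := cut [] [] _ _ _ hrev (axRevBrac true A) (by simpa using hΓ)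
  simpa using cut_map_revrev (Γ := []) (Δ := Γ.reverse) (by simpa [List.map_reverse] using hbrac)

theorem triple_reverse (p q r : P) :
    Db P true [prim r, prim q, prim p]
      (brac (mul (mul (brac (prim p)) (brac (prim q))) (brac (prim r)))) := by
  have hbrac (t : P) : Db P true [rev (prim t)] (brac (prim t)) := axRevBrac _ _
  have hprod := mulR _ [rev (prim p), rev (prim q)] _ _ _
    (mulR _ _ _ _ _ (hbrac p) (hbrac q) (by simp) (by simp)) (hbrac r) (by simp) (by simp)
  exact reverse_brac_of_map_rev (Γ := [prim p, prim q, prim r]) hprod (by simp)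

end Db

open Fb in
/-- For pairwise distinct primitive types `p`, `q`, `r`, the sequent
`r, q, p → ((p^⋈·q^⋈)·r^⋈)^⋈` has no cut-free derivation in `L^⋈`;
consequently, cut elimination fails for `L^⋈`. -/
theorem Lbrac_cut_not_eliminable (P : Type) (p q r : P)
    (hpq : p ≠ q) (hqr : q ≠ r) (hpr : p ≠ r) :
    ¬ Db P false [prim r, prim q, prim p]
        (brac (mul (mul (brac (prim p)) (brac (prim q))) (brac (prim r)))) ∧
    ¬ (∀ (Γ : List (Fb P)) (B : Fb P), Db P true Γ B → Db P false Γ B) := by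
  have hcutFree : ¬ Db P false [prim r, prim q, prim p]
      (brac (mul (mul (brac (prim p)) (brac (prim q))) (brac (prim r)))) := fun h =>
    triple_reverse_notMem_primLang hpq hqr hpr (h.mem_primLang (by simp))
  exact ⟨hcutFree, fun hcutElim => hcutFree (hcutElim _ _ (Db.triple_reverse p q r))⟩
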